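/- (TD-MD regret decomposition) Assume f_t : Δ_d → ℝ are convex with subgradients g_t at x_t satisfying ‖g_t‖_∞ ≤ G, stress vectors σ_t with ‖σ_t‖_∞ ≤ B, and x_{t+1} ∝ x_t ⊙ exp(-η(g_t + λ_t σ_t)) with x_1 uniform. Then for any comparator sequence u_t ∈ Δ_d, Σ_{t=1}^T (f_t(x_t) - f_t(u_t)) ≤ (1/η)(log d + Σ_{t=2}^T (D_ψ(u_t,x_t) - D_ψ(u_{t-1},x_t))) + η Σ_{t=1}^T (G + λ_t B)² / 2 + 2B Σ_{t=1}^T λ_t, where D_ψ is the KL divergence on Δ_d. -/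

import Mathlib

/-!
Per round, convexity reduces the regret to the linear loss `⟨g_t, x_t - u_t⟩`. For the
exponentiated step with loss `ℓ = g + λσ` the three-point identity is exact,
`KL(u, x) - KL(u, x') = -η⟨u, ℓ⟩ - log Z`, and Hoeffding's lemma bounds the log-partition
function by `log Z ≤ -η⟨x, ℓ⟩ + η² ‖ℓ‖∞² / 2`; the stress part `λ⟨σ, u - x⟩` is at most `2λB`
by `ℓ₁`/`ℓ∞` duality. Summed over the rounds, the KL terms telescope into the comparator drift,
the initial term `KL(u₀, uniform) ≤ log d`, and a final nonnegative term that is dropped.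
-/

open Finset Real

/-- KL divergence on the simplex (Bregman divergence of negative entropy). -/
noncomputable def klVec {d : ℕ} (u x : Fin d → ℝ) : ℝ :=
  ∑ i, u i * Real.log (u i / x i)

open MeasureTheory ProbabilityTheory InformationTheory

/-- Hoeffding's lemma, for the finite distribution `p`. -/
lemma sum_mul_exp_le_exp_of_abs_le {ι : Type*} [Fintype ι] {p v : ι → ℝ} {M : ℝ}
    (hp : p ∈ stdSimplex ℝ ι) (hv : ∀ i, |v i| ≤ M) (s : ℝ) :
    ∑ i, p i * exp (s * v i) ≤ exp (s * ∑ i, p i * v i + M ^ 2 * s ^ 2 / 2) := by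
  let _ : MeasurableSpace ι := ⊤
  have hP : ∑ i, ENNReal.ofReal (p i) = 1 := by
    rw [← ENNReal.ofReal_sum_of_nonneg fun i _ => hp.1 i, hp.2, ENNReal.ofReal_one]
  set μ := (PMF.ofFintype _ hP).toMeasure
  have hμ : ∀ f : ι → ℝ, ∫ i, f i ∂μ = ∑ i, p i * f i := fun f => by
    simp [μ, PMF.integral_eq_sum, ENNReal.toReal_ofReal (hp.1 _)]
  have hoeffding := (hasSubgaussianMGF_of_mem_Icc (μ := μ) (X := v) (a := -M) (b := M)
    (measurable_of_countable v).aemeasurable (ae_of_all _ fun i => abs_le.mp (hv i))).mgf_le s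
  have hM : (((‖M - -M‖₊ / 2) ^ 2 : NNReal) : ℝ) = M ^ 2 := by simp [← two_mul]
  simp only [mgf, hμ, hM, mul_sub, exp_sub, mul_div, ← sum_div] at hoeffding
  rwa [div_le_iff₀ (exp_pos _), ← exp_add, add_comm] at hoeffding

lemma sum_mul_sub_le_two_mul {ι : Type*} [Fintype ι] {a p q : ι → ℝ} {B : ℝ}
    (hp : p ∈ stdSimplex ℝ ι) (hq : q ∈ stdSimplex ℝ ι) (ha : ∀ i, |a i| ≤ B) :
    ∑ i, a i * (p i - q i) ≤ 2 * B := by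
  have hpq : ∀ i, |p i - q i| ≤ p i + q i := fun i =>
    abs_sub_le_iff.2 ⟨by linarith [hq.1 i], by linarith [hp.1 i]⟩
  calc ∑ i, a i * (p i - q i) ≤ ∑ i, |a i| * (p i + q i) := sum_le_sum fun i _ =>
        (le_abs_self _).trans (abs_mul (a i) _ ▸ by gcongr; exact hpq i)
    _ ≤ ∑ i, B * (p i + q i) := sum_le_sum fun i _ => by
        gcongr
        · linarith [hp.1 i, hq.1 i]
        · exact ha i
    _ = 2 * B := by rw [← mul_sum, sum_add_distrib, hp.2, hq.2]; ring

lemma klVec_nonneg {d : ℕ} {u x : Fin d → ℝ} (hu : ∀ i, 0 ≤ u i) (hx : ∀ i, 0 < x i)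
    (hsum : ∑ i, u i = ∑ i, x i) : 0 ≤ klVec u x := by
  have hterm : ∀ i, u i * log (u i / x i) = x i * klFun (u i / x i) + (u i - x i) := by
    intro i
    rw [klFun_apply, mul_sub, mul_add, ← mul_assoc, mul_div_cancel₀ _ (hx i).ne']
    ring
  calc 0 ≤ ∑ i, x i * klFun (u i / x i) := sum_nonneg fun i _ =>
        mul_nonneg (hx i).le (klFun_nonneg (div_nonneg (hu i) (hx i).le))
    _ = klVec u x := by simp only [klVec, hterm, sum_add_distrib, sum_sub_distrib, hsum,
        sub_self, add_zero]

lemma klVec_const_inv_le {d : ℕ} (hd : 0 < d) {u : Fin d → ℝ}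
    (hu : u ∈ stdSimplex ℝ (Fin d)) : klVec u (fun _ => (d : ℝ)⁻¹) ≤ log d := by
  have hd' : (d : ℝ) ≠ 0 := by positivity
  calc klVec u (fun _ => (d : ℝ)⁻¹) = ∑ i, (u i * log (u i) + u i * log d) :=
        sum_congr rfl fun i _ => by
          rcases (hu.1 i).eq_or_lt with h | h
          · simp [← h]
          · rw [div_inv_eq_mul, log_mul h.ne' hd', mul_add]
    _ ≤ ∑ i, u i * log d := sum_le_sum fun i _ => by
        linarith [mul_log_nonpos (hu.1 i) (mem_Icc_of_mem_stdSimplex hu i).2]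
    _ = log d := by rw [← sum_mul, hu.2, one_mul]

/-- The mirror descent step for the potential `ψ(x) = ∑ xᵢ log xᵢ` on the simplex. -/
noncomputable def expUpdate {ι : Type*} [Fintype ι] (η : ℝ) (x ℓ : ι → ℝ) : ι → ℝ :=
  fun i => x i * exp (-η * ℓ i) / ∑ j, x j * exp (-η * ℓ j)

section expUpdate

variable {ι : Type*} [Fintype ι] [Nonempty ι] {η : ℝ} {x ℓ : ι → ℝ}

lemma sum_mul_exp_pos (hx : ∀ i, 0 < x i) : 0 < ∑ j, x j * exp (-η * ℓ j) :=
  sum_pos (fun j _ => mul_pos (hx j) (exp_pos _)) univ_nonempty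

lemma expUpdate_pos (hx : ∀ i, 0 < x i) (i : ι) : 0 < expUpdate η x ℓ i :=
  div_pos (mul_pos (hx i) (exp_pos _)) (sum_mul_exp_pos hx)

lemma sum_expUpdate (hx : ∀ i, 0 < x i) : ∑ i, expUpdate η x ℓ i = 1 := by
  unfold expUpdate
  rw [← sum_div, div_self (sum_mul_exp_pos hx).ne']

end expUpdate

lemma klVec_sub_klVec_expUpdate {d : ℕ} {η : ℝ} {u x ℓ : Fin d → ℝ}
    (hu : u ∈ stdSimplex ℝ (Fin d)) (hx : ∀ i, 0 < x i) :
    klVec u x - klVec u (expUpdate η x ℓ) =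
      -η * ∑ i, u i * ℓ i - log (∑ j, x j * exp (-η * ℓ j)) := by
  have hterm : ∀ i, u i * log (u i / x i) - u i * log (u i / expUpdate η x ℓ i) =
      -η * (u i * ℓ i) - log (∑ j, x j * exp (-η * ℓ j)) * u i := by
    intro i
    have : Nonempty (Fin d) := ⟨i⟩
    rcases (hu.1 i).eq_or_lt with h | h
    · simp [← h]
    · rw [log_div h.ne' (hx i).ne', log_div h.ne' (expUpdate_pos hx i).ne']
      unfold expUpdate
      rw [log_div (mul_pos (hx i) (exp_pos _)).ne' (sum_mul_exp_pos hx).ne',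
        log_mul (hx i).ne' (exp_pos _).ne', log_exp]
      ring
  rw [klVec, klVec, ← sum_sub_distrib, sum_congr rfl fun i _ => hterm i, sum_sub_distrib,
    ← mul_sum, ← mul_sum, hu.2, mul_one]

lemma sum_mul_sub_le_klVec_sub_klVec_expUpdate {d : ℕ} {η M : ℝ} (hη : 0 < η)
    {u x ℓ : Fin d → ℝ} (hu : u ∈ stdSimplex ℝ (Fin d)) (hx : ∀ i, 0 < x i)
    (hx1 : ∑ i, x i = 1) (hℓ : ∀ i, |ℓ i| ≤ M) :
    ∑ i, ℓ i * (x i - u i) ≤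
      (klVec u x - klVec u (expUpdate η x ℓ)) / η + η * (M ^ 2 / 2) := by
  have : Nonempty (Fin d) :=
    univ_nonempty_iff.mp (nonempty_of_sum_ne_zero (hx1 ▸ one_ne_zero))
  have hlogZ : log (∑ j, x j * exp (-η * ℓ j)) ≤ -η * ∑ i, x i * ℓ i + M ^ 2 * η ^ 2 / 2 := by
    rw [log_le_iff_le_exp (sum_mul_exp_pos hx)]
    simpa using sum_mul_exp_le_exp_of_abs_le ⟨fun i => (hx i).le, hx1⟩ hℓ (-η)
  rw [klVec_sub_klVec_expUpdate hu hx, div_add' _ _ _ hη.ne', le_div_iff₀ hη]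
  simp only [mul_sub, sum_sub_distrib]
  simp only [mul_comm (ℓ _)]
  linarith

lemma sub_le_of_expUpdate {d : ℕ} {η G B lam : ℝ} (hη : 0 < η) (hlam : 0 ≤ lam)
    {F : (Fin d → ℝ) → ℝ} {u x g σ : Fin d → ℝ} (hu : u ∈ stdSimplex ℝ (Fin d))
    (hx : ∀ i, 0 < x i) (hx1 : ∑ i, x i = 1) (hF : F u ≥ F x + ∑ i, g i * (u i - x i))
    (hg : ∀ i, |g i| ≤ G) (hσ : ∀ i, |σ i| ≤ B) :
    F x - F u ≤
      (klVec u x - klVec u (expUpdate η x (g + lam • σ))) / η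
        + η * ((G + lam * B) ^ 2 / 2) + 2 * B * lam := by
  have hℓ : ∀ i, |(g + lam • σ) i| ≤ G + lam * B := fun i => by
    calc |(g + lam • σ) i| ≤ |g i| + lam * |σ i| := by
          simpa [abs_mul, abs_of_nonneg hlam] using abs_add_le (g i) (lam * σ i)
      _ ≤ G + lam * B := by gcongr; exacts [hg i, hσ i]
  have hmirror := sum_mul_sub_le_klVec_sub_klVec_expUpdate hη hu hx hx1 hℓ
  have hstress := sum_mul_sub_le_two_mul hu ⟨fun i => (hx i).le, hx1⟩ hσ
  have hsplit : ∑ i, g i * (u i - x i) + ∑ i, (g + lam • σ) i * (x i - u i)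
      + lam * ∑ i, σ i * (u i - x i) = 0 := by
    simp only [Pi.add_apply, Pi.smul_apply, smul_eq_mul, mul_sum, ← sum_add_distrib]
    exact sum_eq_zero fun i _ => by ring
  linarith [mul_le_mul_of_nonneg_left hstress hlam]

lemma Finset.sum_range_succ_sub_eq {M : Type*} [AddCommGroup M] (F : ℕ → ℕ → M) (n : ℕ) :
    ∑ t ∈ range (n + 1), (F t t - F t (t + 1)) =
      F 0 0 - F n (n + 1) + ∑ t ∈ Ico 1 (n + 1), (F t t - F (t - 1) t) := by
  induction n with
  | zero => simp
  | succ n ih =>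
    rw [sum_range_succ, ih, sum_Ico_succ_top (b := n + 1) (by omega), Nat.add_sub_cancel]
    abel

theorem tdmd_regret_decomposition_general {d : ℕ} (hd : 0 < d) (T : ℕ)
    (η G B : ℝ) (hη : 0 < η)
    (lam : ℕ → ℝ) (hlam : ∀ t, 0 ≤ lam t)
    (f : ℕ → (Fin d → ℝ) → ℝ) (g σ : ℕ → Fin d → ℝ)
    (x : ℕ → Fin d → ℝ)
    (hx0 : x 0 = fun _ => (d : ℝ)⁻¹)
    (hupd : ∀ t i, x (t+1) i =
      x t i * Real.exp (-η * (g t i + lam t * σ t i)) /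
        ∑ j, x t j * Real.exp (-η * (g t j + lam t * σ t j)))
    (hsubgrad : ∀ t < T, ∀ u ∈ stdSimplex ℝ (Fin d),
      f t u ≥ f t (x t) + ∑ i, g t i * (u i - x t i))
    (hgbound : ∀ t < T, ∀ i, |g t i| ≤ G)
    (hσbound : ∀ t < T, ∀ i, |σ t i| ≤ B)
    (u : ℕ → Fin d → ℝ) (hu : ∀ t < T, u t ∈ stdSimplex ℝ (Fin d)) :
    ∑ t ∈ Finset.range T, (f t (x t) - f t (u t)) ≤
      (1/η) * (Real.log d +
        ∑ t ∈ Finset.Ico 1 T, (klVec (u t) (x t) - klVec (u (t-1)) (x t)))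
      + η * ∑ t ∈ Finset.range T, (G + lam t * B) ^ 2 / 2
      + 2 * B * ∑ t ∈ Finset.range T, lam t := by
  have : Nonempty (Fin d) := Fin.pos_iff_nonempty.mp hd
  have hstep : ∀ t, x (t + 1) = expUpdate η (x t) (g t + lam t • σ t) := fun t => funext (hupd t)
  have hpos : ∀ t i, 0 < x t i := by
    intro t
    induction t with
    | zero => simp [hx0, hd]
    | succ t ih => exact hstep t ▸ expUpdate_pos ih
  have hsum : ∀ t, ∑ i, x t i = 1 := by
    rintro (_ | t)
    · simp [hx0, hd.ne']
    · exact hstep t ▸ sum_expUpdate (hpos t)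
  obtain _ | n := T
  · simpa using mul_nonneg (inv_pos.mpr hη).le (log_natCast_nonneg d)
  have hround : ∀ t ∈ range (n + 1), f t (x t) - f t (u t) ≤
      (klVec (u t) (x t) - klVec (u t) (x (t + 1))) / η
        + η * ((G + lam t * B) ^ 2 / 2) + 2 * B * lam t := fun t ht => by
    have ht := mem_range.mp ht
    rw [hstep]
    exact sub_le_of_expUpdate hη (hlam t) (hu t ht) (hpos t) (hsum t)
      (hsubgrad t ht (u t) (hu t ht)) (hgbound t ht) (hσbound t ht)
  have hinit : klVec (u 0) (x 0) ≤ log d := hx0 ▸ klVec_const_inv_le hd (hu 0 n.succ_pos)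
  have hlast : 0 ≤ klVec (u n) (x (n + 1)) :=
    klVec_nonneg (hu n n.lt_succ_self).1 (hpos _) ((hu n n.lt_succ_self).2.trans (hsum _).symm)
  calc ∑ t ∈ range (n + 1), (f t (x t) - f t (u t))
      ≤ (∑ t ∈ range (n + 1), (klVec (u t) (x t) - klVec (u t) (x (t + 1)))) / η
        + η * ∑ t ∈ range (n + 1), (G + lam t * B) ^ 2 / 2
        + 2 * B * ∑ t ∈ range (n + 1), lam t := by
        grw [sum_le_sum hround]
        rw [sum_add_distrib, sum_add_distrib, sum_div, mul_sum, mul_sum]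
    _ ≤ _ := by
        rw [sum_range_succ_sub_eq (fun s t => klVec (u s) (x t)), one_div_mul_eq_div]
        gcongr
        linarith

/-- TD-MD regret decomposition: with the trust-decayed exponentiated update
`x_{t+1} ∝ x_t ⊙ exp(-η(g_t + λ_t σ_t))` started at uniform, subgradient bound `G`,
stress bound `B`, the regret against any comparator sequence `u_t` decomposes into
a `log d / η` term plus comparator-drift, squared-norm, and stress terms. -/
theorem tdmd_regret_decomposition {d : ℕ} (hd : 0 < d) (T : ℕ)
    (η G B : ℝ) (hη : 0 < η) (hG : 0 ≤ G) (hB : 0 ≤ B)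
    (lam : ℕ → ℝ) (hlam : ∀ t, 0 ≤ lam t)
    (f : ℕ → (Fin d → ℝ) → ℝ) (g σ : ℕ → Fin d → ℝ)
    (x : ℕ → Fin d → ℝ)
    (hx0 : x 0 = fun _ => (d : ℝ)⁻¹)
    (hupd : ∀ t i, x (t+1) i =
      x t i * Real.exp (-η * (g t i + lam t * σ t i)) /
        ∑ j, x t j * Real.exp (-η * (g t j + lam t * σ t j)))
    (hsubgrad : ∀ t < T, ∀ u ∈ stdSimplex ℝ (Fin d),
      f t u ≥ f t (x t) + ∑ i, g t i * (u i - x t i))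
    (hgbound : ∀ t < T, ∀ i, |g t i| ≤ G)
    (hσbound : ∀ t < T, ∀ i, |σ t i| ≤ B)
    (u : ℕ → Fin d → ℝ) (hu : ∀ t < T, u t ∈ stdSimplex ℝ (Fin d)) :
    ∑ t ∈ Finset.range T, (f t (x t) - f t (u t)) ≤
      (1/η) * (Real.log d +
        ∑ t ∈ Finset.Ico 1 T, (klVec (u t) (x t) - klVec (u (t-1)) (x t)))
      + η * ∑ t ∈ Finset.range T, (G + lam t * B) ^ 2 / 2
      + 2 * B * ∑ t ∈ Finset.range T, lam t :=
  tdmd_regret_decomposition_general hd T η G B hη lam hlam f g σ x hx0 hupd hsubgrad hgbound hσbound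
    u hu
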